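/- arXiv:2506.09454 — 9 statements merged into one kernel-verified Lean document; each statement's English description precedes it below -/
import Mathlib

section
/- Fix N ≥ 1, a label y ∈ {1,…,N}, and o ∈ ℝ^N. Suppose that for every t ∈ [0,1] the matrix (1/N)·I_N − ∇²ℓ_y(t·o) is positive semidefinite, where ∇²ℓ_y(ξ) is the Hessian of the softmax loss, i.e. (∇²ℓ_y(ξ))_{ij} = p_i(ξ)(𝟙[i=j] − p_j(ξ)) with p_j(ξ) = exp(ξ_j)/Σ_k exp(ξ_k). Then the softmax loss is bounded above by its second-order Taylor surrogate with curvature matrix (1/N)I_N: −log( exp(o_y)/Σ_{k=1}^N exp(o_k) ) ≤ log N − o_y + (1/N)·Σ_{j=1}^N o_j + (1/(2N))·Σ_{j=1}^N o_j². -/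
open Matrix

/-- The softmax probability `p_j(o) = exp(o_j) / ∑_k exp(o_k)`. -/
noncomputable def softmaxP (N : ℕ) (o : Fin N → ℝ) (j : Fin N) : ℝ :=
  Real.exp (o j) / ∑ k, Real.exp (o k)

/-!
Along the ray `t ↦ t • o` the loss `f t = ℓ_y(t • o)` has `f' t = ∑ₖ pₖ oₖ - o_y` and
`f'' t = ∑ₖ pₖ oₖ² - (∑ₖ pₖ oₖ)² = oᵀ ∇²ℓ_y(t • o) o`, where `p = p(t • o)`. The positive
semidefiniteness hypothesis bounds `f''` by `c = (1/N) ∑ⱼ oⱼ²` on `[0, 1]`, and the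
second-order Taylor bound `f 1 ≤ f 0 + f' 0 + c / 2` with `f 0 = log N` and
`f' 0 = (1/N) ∑ⱼ oⱼ - o_y` is the claim.
-/

open Finset Set

theorem le_taylor_of_deriv2_le {f f' f'' : ℝ → ℝ} {a b c : ℝ}
    (hf : ∀ x ∈ Icc a b, HasDerivAt f (f' x) x) (hf' : ∀ x ∈ Icc a b, HasDerivAt f' (f'' x) x)
    (hc : ∀ x ∈ Ico a b, f'' x ≤ c) :
    ∀ x ∈ Icc a b, f x ≤ f a + f' a * (x - a) + c / 2 * (x - a) ^ 2 := by
  have hlin (x : ℝ) : HasDerivAt (fun x => x - a) 1 x := (hasDerivAt_id' x).sub_const a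
  have hf'_le : ∀ x ∈ Icc a b, f' x ≤ f' a + c * (x - a) := by
    have hB (x : ℝ) : HasDerivAt (fun x => f' a + c * (x - a)) c x :=
      (((hlin x).const_mul c).const_add _).congr_deriv (mul_one c)
    exact image_le_of_deriv_right_le_deriv_boundary
      (fun x hx => (hf' x hx).continuousAt.continuousWithinAt)
      (fun x hx => (hf' x (Ico_subset_Icc_self hx)).hasDerivWithinAt) (by simp)
      (fun x _ => (hB x).continuousAt.continuousWithinAt)
      (fun x _ => (hB x).hasDerivWithinAt) hc
  have hB (x : ℝ) : HasDerivAt (fun x => f a + f' a * (x - a) + c / 2 * (x - a) ^ 2)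
      (f' a + c * (x - a)) x :=
    ((((hlin x).const_mul (f' a)).const_add (f a)).fun_add
      (((hlin x).fun_pow 2).const_mul (c / 2))).congr_deriv (by norm_num; ring)
  exact image_le_of_deriv_right_le_deriv_boundary
    (fun x hx => (hf x hx).continuousAt.continuousWithinAt)
    (fun x hx => (hf x (Ico_subset_Icc_self hx)).hasDerivWithinAt) (by simp)
    (fun x _ => (hB x).continuousAt.continuousWithinAt)
    (fun x _ => (hB x).hasDerivWithinAt) (fun x hx => hf'_le x (Ico_subset_Icc_self hx))

section CovMatrix

variable {ι : Type*} [Fintype ι] [DecidableEq ι]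

/-- The Hessian of the softmax loss at `ξ` is `covMatrix (softmaxP N ξ)`. -/
def covMatrix (p : ι → ℝ) : Matrix ι ι ℝ :=
  Matrix.of fun i j => p i * ((if i = j then (1 : ℝ) else 0) - p j)

theorem dotProduct_covMatrix_mulVec (p v : ι → ℝ) :
    v ⬝ᵥ (covMatrix p *ᵥ v) = ∑ i, p i * v i ^ 2 - (∑ i, p i * v i) ^ 2 := by
  simp only [covMatrix, dotProduct, mulVec, of_apply, mul_sub, sub_mul, mul_ite, mul_one,
    mul_zero, ite_mul, zero_mul, sum_sub_distrib, sum_ite_eq, Finset.mem_univ, if_true,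
    Finset.mul_sum]
  rw [sq, sum_mul_sum]
  congr 1
  · exact sum_congr rfl fun i _ => by ring
  · exact sum_congr rfl fun i _ => sum_congr rfl fun j _ => by ring

theorem sum_mul_sq_sub_sq_le_of_posSemidef {p : ι → ℝ} {r : ℝ}
    (h : (r • (1 : Matrix ι ι ℝ) - covMatrix p).PosSemidef) (v : ι → ℝ) :
    ∑ i, p i * v i ^ 2 - (∑ i, p i * v i) ^ 2 ≤ r * ∑ i, v i ^ 2 := by
  have hv := h.dotProduct_mulVec_nonneg v
  rw [star_trivial, sub_mulVec, dotProduct_sub, smul_mulVec, one_mulVec, dotProduct_smul,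
    dotProduct_covMatrix_mulVec, smul_eq_mul] at hv
  simp only [dotProduct, ← sq] at hv
  linarith

end CovMatrix

theorem sum_exp_pos {ι : Type*} [Fintype ι] [Nonempty ι] (ξ : ι → ℝ) :
    0 < ∑ k, Real.exp (ξ k) :=
  sum_pos (fun _ _ => Real.exp_pos _) univ_nonempty

theorem hasDerivAt_sum_exp_smul {ι : Type*} [Fintype ι] (o : ι → ℝ) (t : ℝ) :
    HasDerivAt (fun s : ℝ => ∑ k, Real.exp ((s • o) k)) (∑ k, Real.exp ((t • o) k) * o k) t :=
  HasDerivAt.fun_sum fun k _ => by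
    simpa using ((hasDerivAt_id t).mul_const (o k)).exp

section Softmax

variable {N : ℕ}

theorem softmaxP_zero (j : Fin N) : softmaxP N 0 j = 1 / N := by
  simp [softmaxP]

variable [Nonempty (Fin N)]

theorem softmaxP_pos (ξ : Fin N → ℝ) (j : Fin N) : 0 < softmaxP N ξ j :=
  div_pos (Real.exp_pos _) (sum_exp_pos ξ)

theorem hasDerivAt_softmaxP_smul (o : Fin N → ℝ) (j : Fin N) (t : ℝ) :
    HasDerivAt (fun s : ℝ => softmaxP N (s • o) j)
      (softmaxP N (t • o) j * (o j - ∑ k, softmaxP N (t • o) k * o k)) t := by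
  have hexp : HasDerivAt (fun s : ℝ => Real.exp ((s • o) j)) (Real.exp ((t • o) j) * o j) t := by
    simpa using ((hasDerivAt_id t).mul_const (o j)).exp
  refine (hexp.div (hasDerivAt_sum_exp_smul o t) (sum_exp_pos _).ne').congr_deriv ?_
  have := (sum_exp_pos (t • o)).ne'
  simp only [softmaxP, div_mul_eq_mul_div, ← sum_div]
  field_simp

theorem hasDerivAt_neg_log_softmaxP_smul (o : Fin N → ℝ) (y : Fin N) (t : ℝ) :
    HasDerivAt (fun s : ℝ => -Real.log (softmaxP N (s • o) y))
      (∑ k, softmaxP N (t • o) k * o k - o y) t := by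
  refine ((hasDerivAt_softmaxP_smul o y t).log (softmaxP_pos _ y).ne').neg.congr_deriv ?_
  have := (softmaxP_pos (t • o) y).ne'
  field_simp
  ring

theorem hasDerivAt_sum_softmaxP_smul_mul (o : Fin N → ℝ) (t : ℝ) :
    HasDerivAt (fun s : ℝ => ∑ k, softmaxP N (s • o) k * o k)
      (∑ k, softmaxP N (t • o) k * o k ^ 2 - (∑ k, softmaxP N (t • o) k * o k) ^ 2) t := by
  refine (HasDerivAt.fun_sum (u := univ) fun k _ =>
    (hasDerivAt_softmaxP_smul o k t).mul_const (o k)).congr_deriv ?_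
  simp only [mul_sub, sub_mul, sum_sub_distrib]
  congr 1
  · exact sum_congr rfl fun k _ => by ring
  · rw [sq, sum_mul]
    exact sum_congr rfl fun k _ => by ring

end Softmax

theorem softmax_rg2_upper_bound_general (N : ℕ) (y : Fin N) (o : Fin N → ℝ)
    (hpsd : ∀ t ∈ Set.Icc (0 : ℝ) 1,
      (((1 : ℝ) / N) • (1 : Matrix (Fin N) (Fin N) ℝ)
        - Matrix.of (fun i j => softmaxP N (t • o) i *
            ((if i = j then (1 : ℝ) else 0) - softmaxP N (t • o) j))).PosSemidef) :
    - Real.log (Real.exp (o y) / ∑ k, Real.exp (o k)) ≤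
      Real.log N - o y + (1 / N) * ∑ j, o j + (1 / (2 * N)) * ∑ j, o j ^ 2 := by
  have : Nonempty (Fin N) := ⟨y⟩
  have hTaylor := le_taylor_of_deriv2_le (a := 0) (b := 1)
    (f := fun t => -Real.log (softmaxP N (t • o) y))
    (fun t _ => hasDerivAt_neg_log_softmaxP_smul o y t)
    (fun t _ => (hasDerivAt_sum_softmaxP_smul_mul o t).sub_const (o y))
    (fun t ht => sum_mul_sq_sub_sq_le_of_posSemidef (hpsd t (Ico_subset_Icc_self ht)) o)
    1 (right_mem_Icc.mpr zero_le_one)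
  simp only [one_smul, zero_smul, softmaxP_zero, ← Finset.mul_sum] at hTaylor
  refine hTaylor.trans_eq ?_
  rw [one_div, Real.log_inv, neg_neg]
  ring

/-- fix `N ≥ 1`, a label `y` and `o ∈ ℝ^N`.  If for every `t ∈ [0,1]` the
matrix `(1/N) I_N - ∇²ℓ_y(t·o)` is positive semidefinite, where
`(∇²ℓ_y(ξ))_{ij} = p_i(ξ)(𝟙[i=j] - p_j(ξ))`, then the softmax loss is bounded above by
its second-order Taylor surrogate with curvature matrix `(1/N) I_N`:
`-log(exp(o_y)/∑_k exp(o_k)) ≤ log N - o_y + (1/N) ∑_j o_j + (1/(2N)) ∑_j o_j²`. -/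
theorem softmax_rg2_upper_bound (N : ℕ) (hN : 1 ≤ N) (y : Fin N) (o : Fin N → ℝ)
    (hpsd : ∀ t ∈ Set.Icc (0 : ℝ) 1,
      (((1 : ℝ) / N) • (1 : Matrix (Fin N) (Fin N) ℝ)
        - Matrix.of (fun i j => softmaxP N (t • o) i *
            ((if i = j then (1 : ℝ) else 0) - softmaxP N (t • o) j))).PosSemidef) :
    - Real.log (Real.exp (o y) / ∑ k, Real.exp (o k)) ≤
      Real.log N - o y + (1 / N) * ∑ j, o j + (1 / (2 * N)) * ∑ j, o j ^ 2 :=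
  softmax_rg2_upper_bound_general N y o hpsd
end

section
/- Let N ≥ 1, let c, f, g : {1,…,N} → ℝ with c_j ≥ 0 for all j, and let π, σ be permutations of {1,…,N}. If π maximizes the c-weighted sum of f over all permutations, i.e. Σ_{j=1}^N c_{π(j)} f_j ≥ Σ_{j=1}^N c_{τ(j)} f_j for every permutation τ, then Σ_{j=1}^N c_{σ(j)} g_j − Σ_{j=1}^N c_{π(j)} g_j ≤ ( 2 Σ_{j=1}^N c_j² )^{1/2} · ( Σ_{j=1}^N (f_j − g_j)² )^{1/2}. -/
/-! Comparing with `σ` costs `π` nothing on `f`, so the regret on `g` is at most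
`∑ⱼ (c_{σ(j)} - c_{π(j)}) (g_j - f_j)`. Cauchy–Schwarz bounds this by the product of the norms,
and since `c ≥ 0` the cross term `∑ⱼ c_{σ(j)} c_{π(j)}` is nonnegative, whence
`‖c ∘ σ - c ∘ π‖² ≤ ‖c ∘ σ‖² + ‖c ∘ π‖² = 2 ‖c‖²`. -/

open Finset

variable {ι : Type*} [Fintype ι]

theorem sum_mul_sub_sum_mul_le_of_sum_mul_le {a b f g : ι → ℝ}
    (h : ∑ i, a i * f i ≤ ∑ i, b i * f i) :
    ∑ i, a i * g i - ∑ i, b i * g i ≤ ∑ i, (a i - b i) * (g i - f i) := by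
  have hsplit : ∑ i, a i * g i - ∑ i, b i * g i =
      ∑ i, (a i - b i) * (g i - f i) + (∑ i, a i * f i - ∑ i, b i * f i) := by
    simp only [← sum_sub_distrib, ← sum_add_distrib]
    exact sum_congr rfl fun i _ => by ring
  linarith

theorem sum_sub_sq_le_sum_sq_add_sum_sq {a b : ι → ℝ} (ha : ∀ i, 0 ≤ a i) (hb : ∀ i, 0 ≤ b i) :
    ∑ i, (a i - b i) ^ 2 ≤ ∑ i, a i ^ 2 + ∑ i, b i ^ 2 := by
  rw [← sum_add_distrib]
  exact sum_le_sum fun i _ => by nlinarith [mul_nonneg (ha i) (hb i)]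

theorem dcg_suboptimality_bound_general (N : ℕ) (c f g : Fin N → ℝ)
    (hc : ∀ j, 0 ≤ c j) (piPerm sigmaPerm : Equiv.Perm (Fin N))
    (hpi : ∀ tau : Equiv.Perm (Fin N), ∑ j, c (tau j) * f j ≤ ∑ j, c (piPerm j) * f j) :
    ∑ j, c (sigmaPerm j) * g j - ∑ j, c (piPerm j) * g j ≤
      Real.sqrt (2 * ∑ j, c j ^ 2) * Real.sqrt (∑ j, (f j - g j) ^ 2) := by
  have hdiff : ∑ j, (c (sigmaPerm j) - c (piPerm j)) ^ 2 ≤ 2 * ∑ j, c j ^ 2 := by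
    calc ∑ j, (c (sigmaPerm j) - c (piPerm j)) ^ 2
        ≤ ∑ j, c (sigmaPerm j) ^ 2 + ∑ j, c (piPerm j) ^ 2 :=
          sum_sub_sq_le_sum_sq_add_sum_sq (fun _ => hc _) (fun _ => hc _)
      _ = 2 * ∑ j, c j ^ 2 := by
          rw [Equiv.sum_comp sigmaPerm (fun j => c j ^ 2),
            Equiv.sum_comp piPerm (fun j => c j ^ 2)]
          ring
  calc ∑ j, c (sigmaPerm j) * g j - ∑ j, c (piPerm j) * g j
      ≤ ∑ j, (c (sigmaPerm j) - c (piPerm j)) * (g j - f j) :=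
        sum_mul_sub_sum_mul_le_of_sum_mul_le (hpi sigmaPerm)
    _ ≤ Real.sqrt (∑ j, (c (sigmaPerm j) - c (piPerm j)) ^ 2) *
          Real.sqrt (∑ j, (g j - f j) ^ 2) :=
        Real.sum_mul_le_sqrt_mul_sqrt _ _ _
    _ ≤ Real.sqrt (2 * ∑ j, c j ^ 2) * Real.sqrt (∑ j, (f j - g j) ^ 2) := by
        simp only [sub_sq_comm (g _)]
        gcongr

/-- let `c, f, g : {1,…,N} → ℝ` with `c_j ≥ 0`, and let `π, σ` be
permutations of `{1,…,N}`.  If `π` maximizes the `c`-weighted sum of `f` over all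
permutations, then
`∑_j c_{σ(j)} g_j - ∑_j c_{π(j)} g_j ≤ (2 ∑_j c_j²)^{1/2} (∑_j (f_j - g_j)²)^{1/2}`. -/
theorem dcg_suboptimality_bound (N : ℕ) (hN : 1 ≤ N) (c f g : Fin N → ℝ)
    (hc : ∀ j, 0 ≤ c j) (piPerm sigmaPerm : Equiv.Perm (Fin N))
    (hpi : ∀ tau : Equiv.Perm (Fin N), ∑ j, c (tau j) * f j ≤ ∑ j, c (piPerm j) * f j) :
    ∑ j, c (sigmaPerm j) * g j - ∑ j, c (piPerm j) * g j ≤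
      Real.sqrt (2 * ∑ j, c j ^ 2) * Real.sqrt (∑ j, (f j - g j) ^ 2) :=
  dcg_suboptimality_bound_general N c f g hc piPerm sigmaPerm hpi
end

section
/- Let N ≥ 1, let c : {1,…,N} → ℝ with c_j ≥ 0, let f, f_B : {1,…,N} → ℝ, and define the surrogate risk Φ_B(f) = Σ_{j=1}^N (f_j − f_B(j))², whose minimum over all f is Φ_B* = 0. Let π be a permutation maximizing Σ_j c_{π(j)} f_j among all permutations, and let σ be a permutation maximizing Σ_j c_{σ(j)} f_B(j) among all permutations. Then the DCG regret satisfies ( −Σ_j c_{π(j)} f_B(j) ) − ( −Σ_j c_{σ(j)} f_B(j) ) ≤ ( 2 Σ_{j=1}^N c_j² )^{1/2} · ( Φ_B(f) − Φ_B* )^{1/2}; that is, the squared surrogate Φ_B is DCG-consistent with a quantitative square-root rate. -/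
/-!
Write `d j = c (σ j) - c (π j)`, so that the regret is `∑ d j * f_B j`. Optimality of `π` for
the scores `f` says exactly `∑ d j * f j ≤ 0`, hence the regret is at most
`∑ d j * (f_B j - f j)`, which Cauchy–Schwarz bounds by `‖d‖ · ‖f - f_B‖`. Since `c ≥ 0`,
`(c (σ j) - c (π j))² ≤ c (σ j)² + c (π j)²`, and summing over `j` gives `‖d‖² ≤ 2 ∑ c j²`.
-/

open Finset

variable {ι : Type*} [Fintype ι]

theorem isLeast_sum_sq_sub (b : ι → ℝ) :
    IsLeast {v : ℝ | ∃ g : ι → ℝ, v = ∑ j, (g j - b j) ^ 2} 0 :=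
  ⟨⟨b, by simp⟩, by rintro v ⟨g, rfl⟩; positivity⟩

theorem sum_sq_sub_comp_perm_le {c : ι → ℝ} (hc : ∀ j, 0 ≤ c j) (σ π : Equiv.Perm ι) :
    ∑ j, (c (σ j) - c (π j)) ^ 2 ≤ 2 * ∑ j, c j ^ 2 :=
  calc ∑ j, (c (σ j) - c (π j)) ^ 2
      ≤ ∑ j, (c (σ j) ^ 2 + c (π j) ^ 2) :=
        sum_le_sum fun j _ => by nlinarith [mul_nonneg (hc (σ j)) (hc (π j))]
    _ = 2 * ∑ j, c j ^ 2 := by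
        rw [sum_add_distrib, Equiv.sum_comp σ (c · ^ 2), Equiv.sum_comp π (c · ^ 2)]
        ring

theorem sum_sub_comp_perm_mul_le_of_isMax {c f b : ι → ℝ} (hc : ∀ j, 0 ≤ c j)
    {π : Equiv.Perm ι} (hπ : ∀ τ : Equiv.Perm ι, ∑ j, c (τ j) * f j ≤ ∑ j, c (π j) * f j)
    (σ : Equiv.Perm ι) :
    ∑ j, (c (σ j) - c (π j)) * b j ≤
      Real.sqrt (2 * ∑ j, c j ^ 2) * Real.sqrt (∑ j, (f j - b j) ^ 2) := by
  set d : ι → ℝ := fun j => c (σ j) - c (π j)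
  have hdf : ∑ j, d j * f j ≤ 0 := by
    simp only [d, sub_mul, sum_sub_distrib]
    linarith [hπ σ]
  have hsplit : ∑ j, d j * b j = ∑ j, d j * (b j - f j) + ∑ j, d j * f j := by
    rw [← sum_add_distrib]
    exact sum_congr rfl fun j _ => by ring
  have hnorm : ∑ j, (b j - f j) ^ 2 = ∑ j, (f j - b j) ^ 2 :=
    sum_congr rfl fun j _ => by ring
  calc ∑ j, d j * b j ≤ ∑ j, d j * (b j - f j) := by linarith
    _ ≤ Real.sqrt (∑ j, d j ^ 2) * Real.sqrt (∑ j, (b j - f j) ^ 2) :=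
        Real.sum_mul_le_sqrt_mul_sqrt _ _ _
    _ ≤ Real.sqrt (2 * ∑ j, c j ^ 2) * Real.sqrt (∑ j, (f j - b j) ^ 2) := by
        rw [hnorm]
        gcongr
        exact sum_sq_sub_comp_perm_le hc σ π

theorem squared_surrogate_dcg_consistency_general (N : ℕ) (c f fB : Fin N → ℝ)
    (hc : ∀ j, 0 ≤ c j) (piPerm sigmaPerm : Equiv.Perm (Fin N))
    (hpi : ∀ tau : Equiv.Perm (Fin N), ∑ j, c (tau j) * f j ≤ ∑ j, c (piPerm j) * f j) :
    IsLeast {v : ℝ | ∃ g : Fin N → ℝ, v = ∑ j, (g j - fB j) ^ 2} 0 ∧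
    (- ∑ j, c (piPerm j) * fB j) - (- ∑ j, c (sigmaPerm j) * fB j) ≤
      Real.sqrt (2 * ∑ j, c j ^ 2) * Real.sqrt ((∑ j, (f j - fB j) ^ 2) - 0) := by
  refine ⟨isLeast_sum_sq_sub fB, ?_⟩
  have hregret : (- ∑ j, c (piPerm j) * fB j) - (- ∑ j, c (sigmaPerm j) * fB j) =
      ∑ j, (c (sigmaPerm j) - c (piPerm j)) * fB j := by
    simp only [sub_mul, sum_sub_distrib]
    ring
  rw [hregret, sub_zero]
  exact sum_sub_comp_perm_mul_le_of_isMax hc hpi sigmaPerm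

/-- let `c_j ≥ 0`, let `f, f_B : {1,…,N} → ℝ`, and define the surrogate
risk `Φ_B(f) = ∑_j (f_j - f_B(j))²`, whose minimum over all `f` is `Φ_B* = 0`.  If `π`
maximizes `∑_j c_{π(j)} f_j` among permutations and `σ` maximizes `∑_j c_{σ(j)} f_B(j)`
among permutations, then the DCG regret satisfies
`(-∑_j c_{π(j)} f_B(j)) - (-∑_j c_{σ(j)} f_B(j)) ≤ (2∑_j c_j²)^{1/2} (Φ_B(f) - Φ_B*)^{1/2}`. -/
theorem squared_surrogate_dcg_consistency (N : ℕ) (hN : 1 ≤ N) (c f fB : Fin N → ℝ)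
    (hc : ∀ j, 0 ≤ c j) (piPerm sigmaPerm : Equiv.Perm (Fin N))
    (hpi : ∀ tau : Equiv.Perm (Fin N), ∑ j, c (tau j) * f j ≤ ∑ j, c (piPerm j) * f j)
    (hsigma : ∀ tau : Equiv.Perm (Fin N),
      ∑ j, c (tau j) * fB j ≤ ∑ j, c (sigmaPerm j) * fB j) :
    IsLeast {v : ℝ | ∃ g : Fin N → ℝ, v = ∑ j, (g j - fB j) ^ 2} 0 ∧
    (- ∑ j, c (piPerm j) * fB j) - (- ∑ j, c (sigmaPerm j) * fB j) ≤
      Real.sqrt (2 * ∑ j, c j ^ 2) * Real.sqrt ((∑ j, (f j - fB j) ^ 2) - 0) :=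
  squared_surrogate_dcg_consistency_general N c f fB hc piPerm sigmaPerm hpi
end

section
/- Let N ≥ 1, let P ⊊ {1,…,N} be a nonempty set of positive indices with nonempty complement, let r : {1,…,N} → ℝ satisfy γ := min_{j∈P} r_j − max_{j∉P} r_j > 0, and let w : {1,…,N} → ℝ with w_j ≥ w₀ > 0 for all j. If f : {1,…,N} → ℝ satisfies Σ_{j=1}^N w_j (f_j − r_j)² < w₀ γ² / 4, then f_j > f_{j'} for every j ∈ P and j' ∉ P; in particular, sorting f in decreasing order places all positive indices before all negative ones and hence attains the optimal DCG for 0/1 relevance labels given by membership in P. -/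
/-! Each weight is at least `w₀`, so a single term of the loss already bounds `w₀ (f_j - r_j)²`;
hence every score lies within `γ / 2` of its target, while positive and negative targets are
at least `γ` apart. -/

open Finset

lemma mul_sq_le_weighted_sum_sq {ι : Type*} [Fintype ι] {w x : ι → ℝ} {w₀ : ℝ}
    (hw₀ : 0 ≤ w₀) (hw : ∀ i, w₀ ≤ w i) (j : ι) :
    w₀ * x j ^ 2 ≤ ∑ i, w i * x i ^ 2 :=
  calc w₀ * x j ^ 2 ≤ w j * x j ^ 2 := mul_le_mul_of_nonneg_right (hw j) (sq_nonneg _)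
    _ ≤ ∑ i, w i * x i ^ 2 :=
      single_le_sum (fun i _ => mul_nonneg (hw₀.trans (hw i)) (sq_nonneg _)) (mem_univ j)

lemma abs_lt_of_weighted_sum_sq_lt {ι : Type*} [Fintype ι] {w x : ι → ℝ} {w₀ δ : ℝ}
    (hw₀ : 0 < w₀) (hw : ∀ i, w₀ ≤ w i) (hδ : 0 ≤ δ)
    (hsum : ∑ i, w i * x i ^ 2 < w₀ * δ ^ 2) (j : ι) : |x j| < δ := by
  have hsq : w₀ * x j ^ 2 < w₀ * δ ^ 2 := (mul_sq_le_weighted_sum_sq hw₀.le hw j).trans_lt hsum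
  exact abs_lt_of_sq_lt_sq (lt_of_mul_lt_mul_left hsq hw₀.le) hδ

theorem weighted_squared_separation_general (N : ℕ) (P : Finset (Fin N))
    (hPne : P.Nonempty) (hPcne : Pᶜ.Nonempty) (r w f : Fin N → ℝ) (w0 : ℝ)
    (hw0 : 0 < w0) (hw : ∀ j, w0 ≤ w j)
    (hgamma : 0 < P.inf' hPne r - Pᶜ.sup' hPcne r)
    (hloss : ∑ j, w j * (f j - r j) ^ 2 < w0 * (P.inf' hPne r - Pᶜ.sup' hPcne r) ^ 2 / 4) :
    ∀ j ∈ P, ∀ j' ∉ P, f j' < f j := by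
  set γ := P.inf' hPne r - Pᶜ.sup' hPcne r
  have hclose : ∀ i, |f i - r i| < γ / 2 :=
    abs_lt_of_weighted_sum_sq_lt (x := fun i => f i - r i) hw0 hw (by linarith)
      (by linarith [show w0 * γ ^ 2 / 4 = w0 * (γ / 2) ^ 2 by ring])
  intro j hj j' hj'
  have hpos : P.inf' hPne r ≤ r j := inf'_le r hj
  have hneg : r j' ≤ Pᶜ.sup' hPcne r := le_sup' r (mem_compl.mpr hj')
  linarith [abs_lt.mp (hclose j), abs_lt.mp (hclose j')]

/-- let `P ⊊ {1,…,N}` be a nonempty set of positive indices with nonempty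
complement, let `r` satisfy `γ := min_{j∈P} r_j - max_{j∉P} r_j > 0`, and let `w_j ≥ w₀ > 0`.
If `∑_j w_j (f_j - r_j)² < w₀ γ² / 4`, then `f_j > f_{j'}` for every `j ∈ P` and `j' ∉ P`. -/
theorem weighted_squared_separation (N : ℕ) (hN : 1 ≤ N) (P : Finset (Fin N))
    (hPne : P.Nonempty) (hPcne : Pᶜ.Nonempty) (r w f : Fin N → ℝ) (w0 : ℝ)
    (hw0 : 0 < w0) (hw : ∀ j, w0 ≤ w j)
    (hgamma : 0 < P.inf' hPne r - Pᶜ.sup' hPcne r)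
    (hloss : ∑ j, w j * (f j - r j) ^ 2 < w0 * (P.inf' hPne r - Pᶜ.sup' hPcne r) ^ 2 / 4) :
    ∀ j ∈ P, ∀ j' ∉ P, f j' < f j :=
  weighted_squared_separation_general N P hPne hPcne r w f w0 hw0 hw hgamma hloss
end

section
/- Let N ≥ 1, let m be a real number with 0 < m ≤ N, let c : {1,…,N} → ℝ with c_j ≥ 0, and let β : {1,…,N} → ℝ (Bayes relevance probabilities). Define η_j = (N/m)·β_j − 1 and the RG² conditional surrogate risk Φ(o) = Σ_{j=1}^N (m/(2N)) (o_j − η_j)², whose minimum is Φ* = 0. Let π be a permutation maximizing Σ_j c_{π(j)} o_j among all permutations, and let σ be a permutation maximizing Σ_j c_{σ(j)} β_j. Then the DCG regret satisfies Σ_j c_{σ(j)} β_j − Σ_j c_{π(j)} β_j ≤ 2·( (m/N)·Σ_{j=1}^N c_j² )^{1/2} · ( Φ(o) − Φ* )^{1/2}; i.e., there is an explicit constant C = 2√(m Σ_j c_j² / N) with ℒ_DCG(o) − ℒ_DCG* ≤ C (ℒ_RG²(o) − ℒ_RG²*)^{1/2}. -/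
/-!
Write `e = c ∘ σ - c ∘ π`. Since `β = (m/N)(η + 1)` and `∑ e = 0`, the regret is `(m/N) ∑ e η`.
Optimality of `π` for `o` gives `∑ e o ≤ 0`, so `∑ e η ≤ ∑ e (η - o)`, and Cauchy–Schwarz bounds
this by `‖e‖ ‖o - η‖`, where `‖e‖² ≤ 2 ∑ c²` because `c ≥ 0`.
-/

open Finset

section PermutationRegret

variable {ι : Type*} [Fintype ι]

lemma isLeast_sum_mul_sq_sub {w : ℝ} (hw : 0 ≤ w) (η : ι → ℝ) :
    IsLeast {v : ℝ | ∃ o : ι → ℝ, v = ∑ j, w * (o j - η j) ^ 2} 0 :=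
  ⟨⟨η, by simp⟩, by
    rintro v ⟨o, rfl⟩
    exact sum_nonneg fun j _ => by positivity⟩

lemma sum_sub_comp_perm_sq_le {c : ι → ℝ} (hc : ∀ i, 0 ≤ c i) (σ π : Equiv.Perm ι) :
    ∑ j, (c (σ j) - c (π j)) ^ 2 ≤ 2 * ∑ j, c j ^ 2 :=
  calc ∑ j, (c (σ j) - c (π j)) ^ 2 ≤ ∑ j, (c (σ j) ^ 2 + c (π j) ^ 2) :=
        sum_le_sum fun j _ => by nlinarith [mul_nonneg (hc (σ j)) (hc (π j))]
    _ = 2 * ∑ j, c j ^ 2 := by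
        rw [sum_add_distrib, Equiv.sum_comp σ (c · ^ 2), Equiv.sum_comp π (c · ^ 2)]
        ring

lemma sum_comp_perm_mul_affine_sub (c η : ι → ℝ) (a : ℝ) (σ π : Equiv.Perm ι) :
    ∑ j, c (σ j) * (a * (η j + 1)) - ∑ j, c (π j) * (a * (η j + 1)) =
      a * (∑ j, c (σ j) * η j - ∑ j, c (π j) * η j) := by
  have hc : ∑ j, c (σ j) = ∑ j, c (π j) := by rw [Equiv.sum_comp σ c, Equiv.sum_comp π c]
  simp only [mul_add, mul_one, mul_left_comm _ a, sum_add_distrib, ← mul_sum]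
  rw [← sum_mul, ← sum_mul, hc]
  ring

lemma sum_comp_perm_mul_sub_le_of_le {c : ι → ℝ} (hc : ∀ i, 0 ≤ c i) (o η : ι → ℝ)
    (σ π : Equiv.Perm ι) (hπ : ∑ j, c (σ j) * o j ≤ ∑ j, c (π j) * o j) :
    ∑ j, c (σ j) * η j - ∑ j, c (π j) * η j ≤
      √(2 * ∑ j, c j ^ 2) * √(∑ j, (o j - η j) ^ 2) := by
  set e : ι → ℝ := fun j => c (σ j) - c (π j)
  have he_o : ∑ j, e j * o j ≤ 0 := by
    simp only [e, sub_mul, sum_sub_distrib]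
    linarith
  calc ∑ j, c (σ j) * η j - ∑ j, c (π j) * η j = ∑ j, e j * η j := by
        simp only [e, sub_mul, sum_sub_distrib]
    _ ≤ ∑ j, e j * (η j - o j) := by
        simp only [mul_sub, sum_sub_distrib]
        linarith
    _ ≤ √(∑ j, e j ^ 2) * √(∑ j, (η j - o j) ^ 2) := Real.sum_mul_le_sqrt_mul_sqrt _ _ _
    _ ≤ √(2 * ∑ j, c j ^ 2) * √(∑ j, (o j - η j) ^ 2) := by
        simp only [sub_sq_comm (η _)]
        gcongr
        exact sum_sub_comp_perm_sq_le hc σ π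

end PermutationRegret

lemma two_mul_sqrt_mul_sqrt_half_mul {a : ℝ} (ha : 0 ≤ a) (x y : ℝ) :
    2 * √(a * x) * √(a / 2 * y) = a * (√(2 * x) * √y) := by
  rw [Real.sqrt_mul ha, Real.sqrt_mul (by positivity), Real.sqrt_mul zero_le_two,
    Real.sqrt_div' _ zero_le_two]
  have h2 : √(2 : ℝ) ≠ 0 := by positivity
  field_simp
  rw [Real.sq_sqrt ha, Real.sq_sqrt zero_le_two]
  ring

theorem rg2_dcg_consistency_general (N : ℕ) (m : ℝ) (hm0 : 0 < m)
    (c beta o : Fin N → ℝ) (hc : ∀ j, 0 ≤ c j)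
    (eta : Fin N → ℝ) (heta : ∀ j, eta j = (N / m) * beta j - 1)
    (piPerm sigmaPerm : Equiv.Perm (Fin N))
    (hpi : ∀ tau : Equiv.Perm (Fin N), ∑ j, c (tau j) * o j ≤ ∑ j, c (piPerm j) * o j) :
    IsLeast {v : ℝ | ∃ o' : Fin N → ℝ, v = ∑ j, (m / (2 * N)) * (o' j - eta j) ^ 2} 0 ∧
    ∑ j, c (sigmaPerm j) * beta j - ∑ j, c (piPerm j) * beta j ≤
      2 * Real.sqrt ((m / N) * ∑ j, c j ^ 2) *
        Real.sqrt ((∑ j, (m / (2 * N)) * (o j - eta j) ^ 2) - 0) := by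
  have hw : 0 ≤ m / N := by positivity
  refine ⟨isLeast_sum_mul_sq_sub (by positivity) eta, ?_⟩
  have hbeta : ∀ j, beta j = m / N * (eta j + 1) := fun j => by
    have : (N : ℝ) ≠ 0 := by exact_mod_cast j.pos.ne'
    rw [heta]
    field_simp
    ring
  simp only [hbeta]
  rw [sum_comp_perm_mul_affine_sub, sub_zero, ← mul_sum, mul_comm 2 (N : ℝ), ← div_div,
    two_mul_sqrt_mul_sqrt_half_mul hw]
  gcongr
  exact sum_comp_perm_mul_sub_le_of_le hc o eta sigmaPerm piPerm (hpi sigmaPerm)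

/-- let `N ≥ 1`, `0 < m ≤ N`, `c_j ≥ 0` and let `β` be the Bayes relevance
probabilities.  With `η_j = (N/m)β_j - 1` and the RG² conditional surrogate risk
`Φ(o) = ∑_j (m/(2N))(o_j - η_j)²` (whose minimum is `Φ* = 0`), if `π` maximizes
`∑_j c_{π(j)} o_j` among permutations and `σ` maximizes `∑_j c_{σ(j)} β_j`, then the DCG
regret satisfies
`∑_j c_{σ(j)} β_j - ∑_j c_{π(j)} β_j ≤ 2 ((m/N) ∑_j c_j²)^{1/2} (Φ(o) - Φ*)^{1/2}`. -/
theorem rg2_dcg_consistency (N : ℕ) (hN : 1 ≤ N) (m : ℝ) (hm0 : 0 < m) (hmN : m ≤ N)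
    (c beta o : Fin N → ℝ) (hc : ∀ j, 0 ≤ c j)
    (eta : Fin N → ℝ) (heta : ∀ j, eta j = (N / m) * beta j - 1)
    (piPerm sigmaPerm : Equiv.Perm (Fin N))
    (hpi : ∀ tau : Equiv.Perm (Fin N), ∑ j, c (tau j) * o j ≤ ∑ j, c (piPerm j) * o j)
    (hsigma : ∀ tau : Equiv.Perm (Fin N),
      ∑ j, c (tau j) * beta j ≤ ∑ j, c (sigmaPerm j) * beta j) :
    IsLeast {v : ℝ | ∃ o' : Fin N → ℝ, v = ∑ j, (m / (2 * N)) * (o' j - eta j) ^ 2} 0 ∧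
    ∑ j, c (sigmaPerm j) * beta j - ∑ j, c (piPerm j) * beta j ≤
      2 * Real.sqrt ((m / N) * ∑ j, c j ^ 2) *
        Real.sqrt ((∑ j, (m / (2 * N)) * (o j - eta j) ^ 2) - 0) :=
  rg2_dcg_consistency_general N m hm0 c beta o hc eta heta piPerm sigmaPerm hpi
end

section
/- Let M, N ≥ 1, let r : {1,…,M}×{1,…,N} → {0,1}, and for each x let I_x = Σ_{y=1}^N r(x,y), assumed to satisfy I_x ≥ 1 for all x. Then for every o : {1,…,M}×{1,…,N} → ℝ the following exact identity holds: Σ_{(x,y): r(x,y)=1} ( −o(x,y) + (1/(2N)) Σ_{y'=1}^N (o(x,y') + 1)² ) = Σ_{x=1}^M Σ_{y=1}^N (I_x/(2N)) ( o(x,y) + 1 − r(x,y)·N/I_x )² + Σ_{x=1}^M I_x − M·N/2. -/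
open scoped Classical

open Finset

lemma sum_filter_eq_one_eq_sum_mul {ι : Type*} [Fintype ι] {r : ι → ℝ}
    (hr : ∀ y, r y = 0 ∨ r y = 1) (f : ι → ℝ) :
    ∑ y ∈ univ.filter (fun y => r y = 1), f y = ∑ y, r y * f y := by
  rw [sum_filter]
  refine sum_congr rfl fun y _ => ?_
  rcases hr y with h | h <;> simp [h]

lemma weighted_sq_eq_of_eq_zero_or_eq_one {I c r u : ℝ} (hI : I ≠ 0) (hc : c ≠ 0) (hr : r = 0 ∨ r = 1) :
    I / (2 * c) * (u - r * c / I) ^ 2 = I / (2 * c) * u ^ 2 - r * u + r * (c / (2 * I)) := by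
  rcases hr with rfl | rfl <;> field_simp <;> ring

/- Completing the square row by row: since `r y ^ 2 = r y`, the constant terms `r y c / (2 I)`
of the expanded squares add up to `c / 2`. -/
lemma sum_mul_neg_add_sum_sq_eq {ι : Type*} [Fintype ι] {r : ι → ℝ}
    (hr : ∀ y, r y = 0 ∨ r y = 1) (hI : ∑ y, r y ≠ 0) {c : ℝ} (hc : c ≠ 0) (o : ι → ℝ) :
    ∑ y, r y * (- o y + 1 / (2 * c) * ∑ y', (o y' + 1) ^ 2)
      = ∑ y, (∑ y', r y') / (2 * c) * (o y + 1 - r y * c / ∑ y', r y') ^ 2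
        + ∑ y, r y - c / 2 := by
  set I := ∑ y', r y' with hIdef
  have hsq : ∑ y, I / (2 * c) * (o y + 1 - r y * c / I) ^ 2
      = I / (2 * c) * ∑ y, (o y + 1) ^ 2 - ∑ y, r y * (o y + 1) + I * (c / (2 * I)) := by
    rw [sum_congr rfl fun y _ => weighted_sq_eq_of_eq_zero_or_eq_one hI hc (hr y), sum_add_distrib,
      sum_sub_distrib, ← mul_sum, ← sum_mul]
  have hconst : I * (c / (2 * I)) = c / 2 := by field_simp
  rw [hsq, hconst]
  simp only [mul_add, mul_neg, mul_one, sum_add_distrib, sum_neg_distrib, ← sum_mul, ← hIdef]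
  ring

theorem rg2_squared_form_transformation_general (M N : ℕ) (hN : 1 ≤ N)
    (r : Fin M → Fin N → ℝ) (hr : ∀ x y, r x y = 0 ∨ r x y = 1)
    (hI : ∀ x, 1 ≤ ∑ y, r x y) (o : Fin M → Fin N → ℝ) :
    ∑ x, ∑ y ∈ Finset.univ.filter (fun y => r x y = 1),
        (- o x y + (1 / (2 * N)) * ∑ y', (o x y' + 1) ^ 2)
      = (∑ x, ∑ y, ((∑ y', r x y') / (2 * N)) *
            (o x y + 1 - r x y * N / (∑ y', r x y')) ^ 2)
        + (∑ x, ∑ y, r x y) - M * N / 2 := by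
  have hN0 : (N : ℝ) ≠ 0 := Nat.cast_ne_zero.mpr (by omega)
  have hI0 : ∀ x, ∑ y, r x y ≠ 0 := fun x => (zero_lt_one.trans_le (hI x)).ne'
  simp_rw [sum_filter_eq_one_eq_sum_mul (hr _),
    sum_mul_neg_add_sum_sq_eq (hr _) (hI0 _) hN0, sum_sub_distrib, sum_add_distrib,
    sum_const, card_univ, Fintype.card_fin, nsmul_eq_mul]
  ring

/-- for `r : {1,…,M}×{1,…,N} → {0,1}` with `I_x = ∑_y r(x,y) ≥ 1`, and
any `o`, the realized RG² surrogate summed over the positive pairs equals the weighted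
squared loss plus an explicit constant:
`∑_{(x,y): r(x,y)=1} (-o(x,y) + (1/(2N)) ∑_{y'} (o(x,y')+1)²)
  = ∑_x ∑_y (I_x/(2N)) (o(x,y) + 1 - r(x,y) N / I_x)² + ∑_x I_x - M N / 2`. -/
theorem rg2_squared_form_transformation (M N : ℕ) (hM : 1 ≤ M) (hN : 1 ≤ N)
    (r : Fin M → Fin N → ℝ) (hr : ∀ x y, r x y = 0 ∨ r x y = 1)
    (hI : ∀ x, 1 ≤ ∑ y, r x y) (o : Fin M → Fin N → ℝ) :
    ∑ x, ∑ y ∈ Finset.univ.filter (fun y => r x y = 1),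
        (- o x y + (1 / (2 * N)) * ∑ y', (o x y' + 1) ^ 2)
      = (∑ x, ∑ y, ((∑ y', r x y') / (2 * N)) *
            (o x y + 1 - r x y * N / (∑ y', r x y')) ^ 2)
        + (∑ x, ∑ y, r x y) - M * N / 2 :=
  rg2_squared_form_transformation_general M N hN r hr hI o
end

section
/- Let N ≥ 1, o ∈ ℝ^N, and y ∈ {1,…,N}, and let ρ = |{ j ∈ {1,…,N} : o_j ≥ o_y }| be the rank of y under o (so ρ ≥ 1). Then the softmax probability of y satisfies exp(o_y)/Σ_{j=1}^N exp(o_j) ≤ 1/ρ ≤ 1/log₂(1 + ρ). In particular, for a single relevant item y with NDCG equal to 1/log₂(1 + ρ), the softmax probability is a lower bound on NDCG: log( exp(o_y)/Σ_j exp(o_j) ) ≤ log NDCG, so the softmax loss is an upper bound on mean negative log-NDCG. -/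
open scoped Classical

/-!
Each of the `ρ` items ranked at or above `y` contributes at least `exp o_y` to the partition
function, so `∑ⱼ exp o_j ≥ ρ exp o_y`. The second inequality is `log₂(1 + ρ) ≤ ρ`, i.e. Bernoulli's
inequality `1 + ρ ≤ 2^ρ`, and the logarithmic form follows by monotonicity of `log`.
-/

open Finset Real

theorem card_filter_le_nsmul_le_sum {ι M : Type*} [AddCommMonoid M] [PartialOrder M]
    [IsOrderedAddMonoid M] (s : Finset ι) (f : ι → M) (hf : ∀ j ∈ s, 0 ≤ f j) (a : M) :
    #{j ∈ s | a ≤ f j} • a ≤ ∑ j ∈ s, f j :=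
  calc #{j ∈ s | a ≤ f j} • a ≤ ∑ j ∈ s with a ≤ f j, f j :=
        card_nsmul_le_sum _ _ _ fun _ hj ↦ (mem_filter.1 hj).2
    _ ≤ ∑ j ∈ s, f j :=
        sum_le_sum_of_subset_of_nonneg (filter_subset _ _) fun j hj _ ↦ hf j hj

theorem exp_div_sum_exp_le_inv_card_le {ι : Type*} [Fintype ι] (o : ι → ℝ) (y : ι) :
    exp (o y) / ∑ j, exp (o j) ≤ 1 / (#{j | o y ≤ o j} : ℝ) := by
  have hcard : (0 : ℝ) < #{j | o y ≤ o j} := by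
    exact_mod_cast card_pos.2 ⟨y, by simp⟩
  have hsum : 0 < ∑ j, exp (o j) := sum_pos (fun j _ ↦ exp_pos (o j)) ⟨y, mem_univ y⟩
  have hmarkov := card_filter_le_nsmul_le_sum univ (fun j ↦ exp (o j))
    (fun j _ ↦ (exp_pos (o j)).le) (exp (o y))
  simp only [exp_le_exp, nsmul_eq_mul] at hmarkov
  rw [div_le_div_iff₀ hsum hcard]
  linarith

theorem logb_two_one_add_natCast_le (n : ℕ) : logb 2 (1 + n) ≤ n := by
  rw [logb_le_iff_le_rpow one_lt_two (by positivity), rpow_natCast]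
  simpa [one_add_one_eq_two] using one_add_mul_le_pow (a := (1 : ℝ)) (by norm_num) n

theorem one_div_natCast_le_one_div_logb_two_one_add {n : ℕ} (hn : 0 < n) :
    1 / (n : ℝ) ≤ 1 / logb 2 (1 + n) :=
  one_div_le_one_div_of_le (logb_pos one_lt_two (by simpa using hn))
    (logb_two_one_add_natCast_le n)

theorem softmax_prob_le_inv_rank_le_ndcg_general (N : ℕ) (o : Fin N → ℝ)
    (y : Fin N) (rnk : ℕ)
    (hrnk : rnk = (Finset.univ.filter (fun j => o y ≤ o j)).card) :
    Real.exp (o y) / (∑ j, Real.exp (o j)) ≤ 1 / (rnk : ℝ) ∧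
    (1 : ℝ) / (rnk : ℝ) ≤ 1 / Real.logb 2 (1 + (rnk : ℝ)) ∧
    Real.log (Real.exp (o y) / ∑ j, Real.exp (o j)) ≤
      Real.log (1 / Real.logb 2 (1 + (rnk : ℝ))) := by
  subst hrnk
  have hrank_pos : 0 < #{j | o y ≤ o j} := card_pos.2 ⟨y, by simp⟩
  have hsoftmax := exp_div_sum_exp_le_inv_card_le o y
  have hndcg := one_div_natCast_le_one_div_logb_two_one_add hrank_pos
  have hprob_pos : 0 < exp (o y) / ∑ j, exp (o j) :=
    div_pos (exp_pos _) (sum_pos (fun j _ ↦ exp_pos (o j)) ⟨y, mem_univ y⟩)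
  exact ⟨hsoftmax, hndcg, log_le_log hprob_pos (hsoftmax.trans hndcg)⟩

/-- let `ρ = |{j : o_j ≥ o_y}|` be the rank of `y` under `o`.  Then the
softmax probability of `y` satisfies `exp(o_y)/∑_j exp(o_j) ≤ 1/ρ ≤ 1/log₂(1+ρ)`, and in
particular `log(exp(o_y)/∑_j exp(o_j)) ≤ log(1/log₂(1+ρ))`, i.e. the softmax probability
lower-bounds NDCG `= 1/log₂(1+ρ)` for a single relevant item. -/
theorem softmax_prob_le_inv_rank_le_ndcg (N : ℕ) (hN : 1 ≤ N) (o : Fin N → ℝ)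
    (y : Fin N) (rnk : ℕ)
    (hrnk : rnk = (Finset.univ.filter (fun j => o y ≤ o j)).card) :
    Real.exp (o y) / (∑ j, Real.exp (o j)) ≤ 1 / (rnk : ℝ) ∧
    (1 : ℝ) / (rnk : ℝ) ≤ 1 / Real.logb 2 (1 + (rnk : ℝ)) ∧
    Real.log (Real.exp (o y) / ∑ j, Real.exp (o j)) ≤
      Real.log (1 / Real.logb 2 (1 + (rnk : ℝ))) :=
  softmax_prob_le_inv_rank_le_ndcg_general N o y rnk hrnk
end

section
/- Let N ≥ 1, n ≥ 1, o ∈ ℝ^N, and y ∈ {1,…,N}. If y₁, …, yₙ are drawn i.i.d. uniformly from {1,…,N}, then the expectation of the sampled-softmax Taylor surrogate equals a non-sampling weighted surrogate: E[ −o_y + (1/(2(n+1)))·( (o_y + 1)² + Σ_{k=1}^n (o_{y_k} + 1)² ) ] = −o_y + (1/(2(n+1)))·(o_y + 1)² + (n/(2(n+1)))·(1/N)·Σ_{y'=1}^N (o_{y'} + 1)². In particular, the expected surrogate assigns the positive instance weight 1/(2(n+1)) and every one of the N instances weight n/(2N(n+1)), so the effective ratio of positive to per-item negative weight is determined by the sample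 size n and catalogue size N. -/
/-! Under uniform sampling with replacement every sampled coordinate is itself uniform on the
catalogue, so by linearity the expected sum of the `n` sampled terms is `n` times the catalogue
mean, and the constant positive term passes through the expectation unchanged. -/

open Finset BigOperators

namespace Fintype

variable {ι α M : Type*} [Fintype ι] [DecidableEq ι] [Fintype α]
  [AddCommMonoid M] [Module ℚ≥0 M]

lemma expect_comp_eval (i : ι) (f : α → M) : 𝔼 x : ι → α, f (x i) = 𝔼 a, f a := by
  cases isEmpty_or_nonempty α with
  | inl hα =>
    have : IsEmpty (ι → α) := ⟨fun x => hα.false (x i)⟩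
    simp only [univ_eq_empty, expect_empty]
  | inr hα =>
    rw [expect_equiv (Equiv.piSplitAt i fun _ => α) (fun x => f (x i)) (fun p => f p.1)
        fun _ => rfl,
      ← Finset.univ_product_univ, Finset.expect_product]
    simp only [expect_const]

lemma expect_sum_comp_eval (f : α → M) :
    𝔼 x : ι → α, ∑ k, f (x k) = card ι • 𝔼 a, f a := by
  simp only [Finset.expect_sum_comm, expect_comp_eval, sum_const, card_univ]

end Fintype

theorem sampled_softmax_surrogate_expectation_general (N n : ℕ)
    (o : Fin N → ℝ) (y : Fin N) :
    (∑ ys : Fin n → Fin N,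
        (- o y + (1 / (2 * ((n : ℝ) + 1))) *
          ((o y + 1) ^ 2 + ∑ k, (o (ys k) + 1) ^ 2))) / (N : ℝ) ^ n
      = - o y + (1 / (2 * ((n : ℝ) + 1))) * (o y + 1) ^ 2
        + ((n : ℝ) / (2 * ((n : ℝ) + 1))) * ((1 / N) * ∑ y', (o y' + 1) ^ 2) := by
  have : Nonempty (Fin n → Fin N) := ⟨fun _ => y⟩
  set c : ℝ := 1 / (2 * ((n : ℝ) + 1))
  set g : Fin N → ℝ := fun j => (o j + 1) ^ 2
  have hmean : (1 / N : ℝ) * ∑ y', g y' = 𝔼 y', g y' := by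
    rw [Fintype.expect_eq_sum_div_card, Fintype.card_fin]; ring
  have hsample :
      (∑ ys : Fin n → Fin N, (-o y + c * ((o y + 1) ^ 2 + ∑ k, g (ys k)))) / (N : ℝ) ^ n
        = 𝔼 ys : Fin n → Fin N, (-o y + c * ((o y + 1) ^ 2 + ∑ k, g (ys k))) := by
    rw [Fintype.expect_eq_sum_div_card]
    simp only [Fintype.card_pi, Fintype.card_fin, prod_const, card_univ, Nat.cast_pow]
  rw [hsample, hmean]
  simp only [mul_add, Finset.expect_add_distrib, ← Finset.mul_expect, Fintype.expect_const,
    Fintype.expect_sum_comp_eval, Fintype.card_fin, nsmul_eq_mul]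
  ring

/-- if `y₁,…,yₙ` are drawn i.i.d. uniformly from `{1,…,N}` (expectation
realized as the average over all tuples in `{1,…,N}ⁿ`), then the expectation of the
sampled-softmax Taylor surrogate equals a non-sampling weighted surrogate:
`E[-o_y + (1/(2(n+1)))((o_y+1)² + ∑_k (o_{y_k}+1)²)]
  = -o_y + (1/(2(n+1)))(o_y+1)² + (n/(2(n+1))) (1/N) ∑_{y'} (o_{y'}+1)²`. -/
theorem sampled_softmax_surrogate_expectation (N n : ℕ) (hN : 1 ≤ N) (hn : 1 ≤ n)
    (o : Fin N → ℝ) (y : Fin N) :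
    (∑ ys : Fin n → Fin N,
        (- o y + (1 / (2 * ((n : ℝ) + 1))) *
          ((o y + 1) ^ 2 + ∑ k, (o (ys k) + 1) ^ 2))) / (N : ℝ) ^ n
      = - o y + (1 / (2 * ((n : ℝ) + 1))) * (o y + 1) ^ 2
        + ((n : ℝ) / (2 * ((n : ℝ) + 1))) * ((1 / N) * ∑ y', (o y' + 1) ^ 2) :=
  sampled_softmax_surrogate_expectation_general N n o y
end

section
/- Let M, N, K ≥ 1, let W be an M×M real diagonal matrix with strictly positive diagonal entries, let λ > 0, let S be a real M×N matrix, and let Q be a real N×K matrix such that Qᵀ Q is invertible. Define L : ℝ^{M×K} → ℝ by L(P) = tr( (S − P Qᵀ)ᵀ W (S − P Qᵀ) ) + λ ‖P Qᵀ‖_F². Then: (i) a matrix P satisfies the stationarity equation (W + λ I_M) P (Qᵀ Q) = W S Q if and only if P = (W + λ I_M)^{-1} W S Q (Qᵀ Q)^{-1}; and (ii) P₀ = (W + λ I_M)^{-1} W S Q (Qᵀ Q)^{-1} is the unique global minimizer of L. -/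
/-!
With `X = P Qᵀ` the objective is `ℓ(X) = tr((S - X)ᵀ W (S - X)) + λ tr(Xᵀ X)`, and
`ℓ(X₀ + F) = ℓ(X₀) + tr(Fᵀ W F) + λ tr(Fᵀ F) + 2 tr(Fᵀ ((W + λ I) X₀ - W S))`.
Take `X₀ = P₀ Qᵀ` and `F = (P - P₀) Qᵀ`: the linear term equals
`tr((P - P₀)ᵀ ((W + λ I) P₀ QᵀQ - W S Q))`, which the stationarity equation kills, while the
quadratic part is positive because `W ⪰ 0`, `λ > 0`, and `F ≠ 0` as `QᵀQ` is invertible.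
The stationarity equation itself is solved by inverting `W + λ I ≻ 0` and `QᵀQ`.
-/

open Matrix

namespace Matrix

variable {m n k R : Type*} [Fintype n] [Fintype k] [CommRing R]

lemma mul_transpose_ne_zero [DecidableEq k] {E : Matrix m k R} {Q : Matrix n k R}
    (hQ : IsUnit (Qᵀ * Q)) (hE : E ≠ 0) : E * Qᵀ ≠ 0 := by
  intro h
  apply hE
  rw [← mul_nonsing_inv_cancel_right (Qᵀ * Q) E ((isUnit_iff_isUnit_det _).mp hQ),
    ← Matrix.mul_assoc E, h, Matrix.zero_mul, Matrix.zero_mul]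

variable [Fintype m]

lemma sum_sum_sq_eq_trace_transpose_mul_self (X : Matrix m n ℝ) :
    ∑ i, ∑ j, X i j ^ 2 = trace (Xᵀ * X) := by
  simp only [trace, diag, mul_apply, transpose_apply, sq]
  exact Finset.sum_comm

lemma trace_transpose_mul_self_pos {F : Matrix m n ℝ} (hF : F ≠ 0) : 0 < trace (Fᵀ * F) := by
  have hnonneg := (posSemidef_conjTranspose_mul_self F).trace_nonneg
  have hne := trace_conjTranspose_mul_self_eq_zero_iff.not.mpr hF
  rw [conjTranspose_eq_transpose_of_trivial] at hnonneg hne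
  exact hnonneg.lt_of_ne' hne

lemma PosSemidef.trace_transpose_mul_mul_nonneg {W : Matrix m m ℝ} (hW : W.PosSemidef)
    (F : Matrix m n ℝ) : 0 ≤ trace (Fᵀ * W * F) := by
  simpa only [conjTranspose_eq_transpose_of_trivial] using
    (hW.conjTranspose_mul_mul_same F).trace_nonneg

lemma mul_mul_eq_iff_eq_inv_mul_mul [DecidableEq m] [DecidableEq k] {A : Matrix m m R}
    {G : Matrix k k R} (hA : IsUnit A) (hG : IsUnit G) {P B : Matrix m k R} :
    A * P * G = B ↔ P = A⁻¹ * B * G⁻¹ := by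
  have hA' := (isUnit_iff_isUnit_det A).mp hA
  have hG' := (isUnit_iff_isUnit_det G).mp hG
  constructor
  · rintro rfl
    rw [Matrix.mul_assoc A, nonsing_inv_mul_cancel_left _ _ hA',
      mul_nonsing_inv_cancel_right _ _ hG']
  · rintro rfl
    rw [Matrix.mul_assoc, nonsing_inv_mul_cancel_right G _ hG', mul_nonsing_inv_cancel_left A _ hA']

end Matrix

section WeightedRegLoss

variable {m n : Type*} [Fintype m] [Fintype n] [DecidableEq m]

def weightedRegLoss (W : Matrix m m ℝ) (S : Matrix m n ℝ) (lam : ℝ) (X : Matrix m n ℝ) : ℝ :=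
  trace ((S - X)ᵀ * W * (S - X)) + lam * trace (Xᵀ * X)

lemma weightedRegLoss_add {W : Matrix m m ℝ} (hW : Wᵀ = W) (S : Matrix m n ℝ) (lam : ℝ)
    (X F : Matrix m n ℝ) :
    weightedRegLoss W S lam (X + F) = weightedRegLoss W S lam X
      + (trace (Fᵀ * W * F) + lam * trace (Fᵀ * F))
      + 2 * trace (Fᵀ * ((W + lam • 1) * X - W * S)) := by
  have hWsymm (Y : Matrix m n ℝ) : trace (Yᵀ * W * F) = trace (Fᵀ * W * Y) := by
    rw [← trace_transpose]
    simp only [transpose_mul, transpose_transpose, hW, Matrix.mul_assoc]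
  have hXF : trace (Xᵀ * F) = trace (Fᵀ * X) := by
    rw [← trace_transpose, transpose_mul, transpose_transpose]
  have hS : S - (X + F) = (S - X) - F := by abel
  simp only [weightedRegLoss, hS, transpose_sub, transpose_add, Matrix.sub_mul, Matrix.mul_sub,
    Matrix.add_mul, Matrix.mul_add, trace_sub, trace_add, Matrix.smul_mul, Matrix.mul_smul,
    Matrix.one_mul, trace_smul, smul_eq_mul, ← Matrix.mul_assoc, hWsymm, hXF]
  ring

lemma weightedRegLoss_lt_of_stationary {k : Type*} [Fintype k] [DecidableEq k]
    {W : Matrix m m ℝ} (hW : W.PosSemidef) {lam : ℝ} (hlam : 0 < lam) {S : Matrix m n ℝ}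
    {Q : Matrix n k ℝ} (hQ : IsUnit (Qᵀ * Q)) {P₀ P : Matrix m k ℝ}
    (h₀ : (W + lam • 1) * P₀ * (Qᵀ * Q) = W * S * Q) (hP : P ≠ P₀) :
    weightedRegLoss W S lam (P₀ * Qᵀ) < weightedRegLoss W S lam (P * Qᵀ) := by
  set F := (P - P₀) * Qᵀ
  have hPQ : P * Qᵀ = P₀ * Qᵀ + F := by simp only [F, Matrix.sub_mul, add_sub_cancel]
  have hcross : trace (Fᵀ * ((W + lam • 1) * (P₀ * Qᵀ) - W * S)) = 0 := by
    rw [transpose_mul, transpose_transpose, Matrix.mul_assoc, trace_mul_comm, Matrix.mul_assoc,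
      Matrix.sub_mul, Matrix.mul_assoc _ _ Q, Matrix.mul_assoc P₀, ← Matrix.mul_assoc _ P₀, h₀,
      sub_self, Matrix.mul_zero, trace_zero]
  have hWt : Wᵀ = W := by simpa only [conjTranspose_eq_transpose_of_trivial] using hW.1.eq
  have hquad := hW.trace_transpose_mul_mul_nonneg F
  have hF := trace_transpose_mul_self_pos (mul_transpose_ne_zero hQ (sub_ne_zero.mpr hP))
  rw [hPQ, weightedRegLoss_add hWt, hcross]
  nlinarith

end WeightedRegLoss

theorem als_matrix_update_unique_minimizer_general (M N K : ℕ) (d : Fin M → ℝ) (hd : ∀ x, 0 < d x)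
    (lam : ℝ) (hlam : 0 < lam)
    (S : Matrix (Fin M) (Fin N) ℝ) (Q : Matrix (Fin N) (Fin K) ℝ)
    (hQ : IsUnit (Qᵀ * Q)) :
    letI W : Matrix (Fin M) (Fin M) ℝ := Matrix.diagonal d
    letI L : Matrix (Fin M) (Fin K) ℝ → ℝ := fun P =>
      Matrix.trace ((S - P * Qᵀ)ᵀ * W * (S - P * Qᵀ))
        + lam * ∑ x, ∑ y, ((P * Qᵀ) x y) ^ 2
    letI P0 : Matrix (Fin M) (Fin K) ℝ :=
      (W + lam • (1 : Matrix (Fin M) (Fin M) ℝ))⁻¹ * W * S * Q * (Qᵀ * Q)⁻¹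
    (∀ P : Matrix (Fin M) (Fin K) ℝ,
        (W + lam • (1 : Matrix (Fin M) (Fin M) ℝ)) * P * (Qᵀ * Q) = W * S * Q ↔ P = P0) ∧
    (∀ P : Matrix (Fin M) (Fin K) ℝ, P ≠ P0 → L P0 < L P) := by
  set W : Matrix (Fin M) (Fin M) ℝ := diagonal d
  set P0 := (W + lam • (1 : Matrix (Fin M) (Fin M) ℝ))⁻¹ * W * S * Q * (Qᵀ * Q)⁻¹
  have hW : W.PosSemidef := posSemidef_diagonal_iff.mpr fun i => (hd i).le
  have hA : IsUnit (W + lam • 1) := (PosDef.posSemidef_add hW (PosDef.one.smul hlam)).isUnit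
  have hstat (P : Matrix (Fin M) (Fin K) ℝ) :
      (W + lam • 1) * P * (Qᵀ * Q) = W * S * Q ↔ P = P0 := by
    rw [mul_mul_eq_iff_eq_inv_mul_mul hA hQ]
    simp only [P0, Matrix.mul_assoc]
  refine ⟨hstat, fun P hP => ?_⟩
  simpa only [weightedRegLoss, sum_sum_sq_eq_trace_transpose_mul_self] using
    weightedRegLoss_lt_of_stationary hW hlam hQ ((hstat P0).mpr rfl) hP

/-- for a diagonal `W` with strictly positive diagonal, `λ > 0`, and `Q`
with `Qᵀ Q` invertible, consider
`L(P) = tr((S - PQᵀ)ᵀ W (S - PQᵀ)) + λ ‖PQᵀ‖_F²`.  Then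
(i) `P` satisfies the stationarity equation `(W + λ I_M) P (Qᵀ Q) = W S Q` iff
`P = (W + λ I_M)⁻¹ W S Q (Qᵀ Q)⁻¹`; and
(ii) `P₀ = (W + λ I_M)⁻¹ W S Q (Qᵀ Q)⁻¹` is the unique global minimizer of `L`. -/
theorem als_matrix_update_unique_minimizer (M N K : ℕ) (hM : 1 ≤ M) (hN : 1 ≤ N)
    (hK : 1 ≤ K) (d : Fin M → ℝ) (hd : ∀ x, 0 < d x) (lam : ℝ) (hlam : 0 < lam)
    (S : Matrix (Fin M) (Fin N) ℝ) (Q : Matrix (Fin N) (Fin K) ℝ)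
    (hQ : IsUnit (Qᵀ * Q)) :
    letI W : Matrix (Fin M) (Fin M) ℝ := Matrix.diagonal d
    letI L : Matrix (Fin M) (Fin K) ℝ → ℝ := fun P =>
      Matrix.trace ((S - P * Qᵀ)ᵀ * W * (S - P * Qᵀ))
        + lam * ∑ x, ∑ y, ((P * Qᵀ) x y) ^ 2
    letI P0 : Matrix (Fin M) (Fin K) ℝ :=
      (W + lam • (1 : Matrix (Fin M) (Fin M) ℝ))⁻¹ * W * S * Q * (Qᵀ * Q)⁻¹
    (∀ P : Matrix (Fin M) (Fin K) ℝ,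
        (W + lam • (1 : Matrix (Fin M) (Fin M) ℝ)) * P * (Qᵀ * Q) = W * S * Q ↔ P = P0) ∧
    (∀ P : Matrix (Fin M) (Fin K) ℝ, P ≠ P0 → L P0 < L P) :=
  als_matrix_update_unique_minimizer_general M N K d hd lam hlam S Q hQ
end
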